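/- arXiv:2601.12831 — 7 statements merged into one kernel-verified Lean document; each statement's English description precedes it below -/
import Mathlib

section
/- Let X and Y be real Banach spaces, let A : X → Y be a bounded linear operator, and let B : ran(A) → X be a (possibly nonlinear) continuous map satisfying A(B(y)) = y for all y ∈ ran(A). Then ran(A) is a closed subspace of Y. -/
/-!
Continuity of `B` at `0` bounds `B` on a small ball of `ran A`. Rescaling `y ∈ ran A` into that
ball and scaling its `B`-image back gives a preimage of norm at most `C * ‖y‖`, although `B`
itself need not be linear. For complete `X` such controlled preimages persist on the closure of
`ran A` (Banach's successive approximation argument), so `ran A` contains its closure.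
-/

section

variable {𝕜 X Y : Type*} [NontriviallyNormedField 𝕜]
  [NormedAddCommGroup X] [NormedSpace 𝕜 X] [NormedAddCommGroup Y] [NormedSpace 𝕜 Y]

theorem LinearMap.exists_preimage_norm_le_of_rightInverse_continuousAt (f : X →ₗ[𝕜] Y)
    {B : LinearMap.range f → X} (hBcont : ContinuousAt B 0) (hB : ∀ y, f (B y) = y) :
    ∃ C, ∀ y ∈ LinearMap.range f, ∃ x, f x = y ∧ ‖x‖ ≤ C * ‖y‖ := by
  obtain ⟨δ, hδ, hB_small⟩ : ∃ δ > 0, ∀ z : LinearMap.range f, ‖z‖ < δ → ‖B z‖ ≤ ‖B 0‖ + 1 := by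
    have := hBcont.norm.eventually (gt_mem_nhds (lt_add_one ‖B 0‖))
    obtain ⟨δ, hδ, h⟩ := Metric.eventually_nhds_iff.1 this
    exact ⟨δ, hδ, fun z hz => (h (by rwa [dist_zero_right])).le⟩
  obtain ⟨c, hc⟩ := NormedField.exists_one_lt_norm 𝕜
  refine ⟨δ⁻¹ * ‖c‖ * (‖B 0‖ + 1), fun y hy => ?_⟩
  rcases eq_or_ne y 0 with rfl | hy0
  · exact ⟨0, map_zero f, by simp⟩
  obtain ⟨d, hd, hdy, -, hd_inv⟩ := rescale_to_shell hc hδ hy0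
  let z : LinearMap.range f := ⟨d • y, Submodule.smul_mem _ d hy⟩
  refine ⟨d⁻¹ • B z, by rw [map_smul, hB z, inv_smul_smul₀ hd], ?_⟩
  calc ‖d⁻¹ • B z‖ = ‖d‖⁻¹ * ‖B z‖ := by rw [norm_smul, norm_inv]
    _ ≤ δ⁻¹ * ‖c‖ * ‖y‖ * (‖B 0‖ + 1) := by gcongr; exact hB_small z hdy
    _ = δ⁻¹ * ‖c‖ * (‖B 0‖ + 1) * ‖y‖ := by ring

theorem ContinuousLinearMap.isClosed_range_of_exists_preimage_norm_le [CompleteSpace X]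
    (A : X →L[𝕜] Y) {C : ℝ}
    (hA : ∀ y ∈ LinearMap.range (A : X →ₗ[𝕜] Y), ∃ x, A x = y ∧ ‖x‖ ≤ C * ‖y‖) :
    IsClosed (LinearMap.range (A : X →ₗ[𝕜] Y) : Set Y) := by
  let f : NormedAddGroupHom X Y := .ofLipschitz (A : X →+ Y) A.lipschitz
  obtain ⟨C', hC', hf⟩ :
      ∃ C' > 0, f.SurjectiveOnWith (LinearMap.range (A : X →ₗ[𝕜] Y)).toAddSubgroup C' :=
    NormedAddGroupHom.SurjectiveOnWith.exists_pos hA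
  refine isClosed_of_closure_subset fun y hy => ?_
  obtain ⟨x, hx, -⟩ := controlled_closure_of_complete hC' one_pos hf y hy
  exact ⟨x, hx⟩

end

theorem stmt_0_general
    {X Y : Type*} [NormedAddCommGroup X] [NormedSpace ℝ X] [CompleteSpace X]
    [NormedAddCommGroup Y] [NormedSpace ℝ Y]
    (A : X →L[ℝ] Y)
    (B : LinearMap.range (A : X →ₗ[ℝ] Y) → X) (hBcont : Continuous B)
    (hB : ∀ y : LinearMap.range (A : X →ₗ[ℝ] Y), A (B y) = (y : Y)) :
    IsClosed (LinearMap.range (A : X →ₗ[ℝ] Y) : Set Y) := by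
  obtain ⟨C, hC⟩ :=
    (A : X →ₗ[ℝ] Y).exists_preimage_norm_le_of_rightInverse_continuousAt hBcont.continuousAt hB
  exact A.isClosed_range_of_exists_preimage_norm_le hC

/-- If a bounded linear operator `A` between real Banach spaces admits a continuous
(possibly nonlinear) right inverse on its range, then its range is closed. -/
theorem stmt_0
    {X Y : Type*} [NormedAddCommGroup X] [NormedSpace ℝ X] [CompleteSpace X]
    [NormedAddCommGroup Y] [NormedSpace ℝ Y] [CompleteSpace Y]
    (A : X →L[ℝ] Y)
    (B : LinearMap.range (A : X →ₗ[ℝ] Y) → X) (hBcont : Continuous B)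
    (hB : ∀ y : LinearMap.range (A : X →ₗ[ℝ] Y), A (B y) = (y : Y)) :
    IsClosed (LinearMap.range (A : X →ₗ[ℝ] Y) : Set Y) :=
  stmt_0_general A B hBcont hB
end

section
/- Let X be a real Hilbert space, Y a real Banach space, and A : X → Y a bounded linear operator such that ran(A) is not closed in Y. Then every map B : ran(A) → X (not necessarily linear) satisfying A(B(y)) = y for all y ∈ ran(A) is discontinuous. -/
/-!
If `B` is a continuous right inverse of `A` on its range, then `A` corestricted to its range
is a quotient map, so the algebraic isomorphism `X ⧸ ker A ≃ ran A` is a homeomorphism.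
As `X ⧸ ker A` is complete, so is `ran A`, which is therefore closed in `Y`.
-/

open Topology

theorem Topology.IsStrictMap.of_rightInverse {X Y : Type*} [TopologicalSpace X]
    [TopologicalSpace Y] {f : X → Y} (hf : Continuous f) {g : Set.range f → X}
    (hg : Continuous g) (hfg : ∀ y, f (g y) = y) : IsStrictMap f :=
  IsQuotientMap.of_inverse hg hf.rangeFactorization fun y => Subtype.ext (hfg y)

theorem ContinuousLinearMap.isClosed_range_of_continuous_rightInverse {R E F : Type*} [Ring R]
    [SeminormedAddCommGroup E] [Module R E] [CompleteSpace E]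
    [NormedAddCommGroup F] [Module R F]
    (A : E →L[R] F) {B : LinearMap.range (A : E →ₗ[R] F) → E} (hB : Continuous B)
    (hAB : ∀ y, A (B y) = y) : IsClosed (LinearMap.range (A : E →ₗ[R] F) : Set F) := by
  have hA : IsStrictMap (A : E →ₗ[R] F) := IsStrictMap.of_rightInverse A.continuous hB hAB
  let e := ContinuousLinearEquiv.quotKerEquivRange hA
  have : CompleteSpace (LinearMap.range (A : E →ₗ[R] F)) :=
    (e.isUniformEmbedding.isUniformInducing.completeSpace_congr e.surjective).1 inferInstance
  exact (completeSpace_coe_iff_isComplete.1 this).isClosed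

theorem stmt_7_general
    {X : Type*} [NormedAddCommGroup X] [InnerProductSpace ℝ X] [CompleteSpace X]
    {Y : Type*} [NormedAddCommGroup Y] [NormedSpace ℝ Y]
    (A : X →L[ℝ] Y)
    (hran : ¬ IsClosed (LinearMap.range (A : X →ₗ[ℝ] Y) : Set Y))
    (B : LinearMap.range (A : X →ₗ[ℝ] Y) → X)
    (hB : ∀ y : LinearMap.range (A : X →ₗ[ℝ] Y), A (B y) = (y : Y)) :
    ¬ Continuous B :=
  fun hcont => hran (A.isClosed_range_of_continuous_rightInverse hcont hB)

/-- If `ran A` is not closed, then every (possibly nonlinear) right inverse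
`B : ran A → X` of `A` is discontinuous. -/
theorem stmt_7
    {X : Type*} [NormedAddCommGroup X] [InnerProductSpace ℝ X] [CompleteSpace X]
    {Y : Type*} [NormedAddCommGroup Y] [NormedSpace ℝ Y] [CompleteSpace Y]
    (A : X →L[ℝ] Y)
    (hran : ¬ IsClosed (LinearMap.range (A : X →ₗ[ℝ] Y) : Set Y))
    (B : LinearMap.range (A : X →ₗ[ℝ] Y) → X)
    (hB : ∀ y : LinearMap.range (A : X →ₗ[ℝ] Y), A (B y) = (y : Y)) :
    ¬ Continuous B :=
  stmt_7_general A hran B hB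
end

section
/- Let X and Y be real Banach spaces, A : X → Y a bounded linear operator, P : X → X a bounded linear map with ran(P) ⊆ ker(A), U : X → X Lipschitz continuous, and f = id_X + P∘U (so f is Lipschitz with some constant L). Let B : ran(A) → X be a right inverse of A, D₀ ⊆ B(ran(A)), and let (𝓑_δ)_{δ>0} be maps 𝓑_δ : Y → X such that for every x₀ ∈ D₀, sup{‖x₀ − 𝓑_δ(y^δ)‖ : ‖A x₀ − y^δ‖ ≤ δ} → 0 as δ → 0. Then for every x ∈ f(D₀), sup{‖x − f(𝓑_δ(y^δ))‖ : y^δ ∈ Y, ‖A x − y^δ‖ ≤ δ} → 0 as δ → 0; that is, (f∘𝓑_δ)_{δ>0} is a regularization method on the signal class f(D₀). -/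
/-!
A null-space network `f = id + P ∘ U` only adds components in `ker A`, so `A (f x) = A x`:
data for `x₀` are data for `f x₀`, with the same noise level. Since `f` is Lipschitz, hence
uniformly continuous, reconstructions `𝓑_δ(y^δ)` close to `x₀` are mapped to points close to `f x₀`.
-/

section

variable {X Y : Type*} [SeminormedAddCommGroup X] [SeminormedAddCommGroup Y]

/-- The `ε`-`δ` form of `sup {‖x - R δ yδ‖ : ‖A x - yδ‖ ≤ δ} → 0` as `δ → 0`, for all `x ∈ D`. -/
def IsRegularizationMethod (A : X → Y) (R : ℝ → Y → X) (D : Set X) : Prop :=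
  ∀ x ∈ D, ∀ ε : ℝ, 0 < ε → ∃ δ₀ > 0, ∀ δ : ℝ, 0 < δ → δ ≤ δ₀ →
    ∀ yδ : Y, ‖A x - yδ‖ ≤ δ → ‖x - R δ yδ‖ ≤ ε

theorem IsRegularizationMethod.comp_uniformContinuous {A : X → Y} {R : ℝ → Y → X} {D : Set X}
    (hR : IsRegularizationMethod A R D) {g : X → X} (hg : UniformContinuous g)
    (hAg : ∀ x ∈ D, A (g x) = A x) :
    IsRegularizationMethod A (fun δ yδ => g (R δ yδ)) (g '' D) := by
  rintro _ ⟨x, hx, rfl⟩ ε hε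
  obtain ⟨η, hη, hgη⟩ := Metric.uniformContinuous_iff.mp hg ε hε
  obtain ⟨δ₀, hδ₀, hR⟩ := hR x hx (η / 2) (half_pos hη)
  refine ⟨δ₀, hδ₀, fun δ hδ hδδ₀ yδ hyδ => ?_⟩
  rw [hAg x hx] at hyδ
  have hclose : dist x (R δ yδ) < η := by
    rw [dist_eq_norm]
    linarith [hR δ hδ hδδ₀ yδ hyδ]
  simpa only [dist_eq_norm] using (hgη hclose).le

theorem ContinuousLinearMap.apply_add_of_range_le_ker {𝕜 : Type*} [NontriviallyNormedField 𝕜]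
    [NormedSpace 𝕜 X] [NormedSpace 𝕜 Y] {A : X →L[𝕜] Y} {P : X →L[𝕜] X}
    (hP : LinearMap.range (P : X →ₗ[𝕜] X) ≤ LinearMap.ker (A : X →ₗ[𝕜] Y)) (x u : X) :
    A (x + P u) = A x := by
  have hPu : A (P u) = 0 := hP (LinearMap.mem_range_self _ u)
  rw [map_add, hPu, add_zero]

end

theorem stmt_12_general
    {X Y : Type*} [NormedAddCommGroup X] [NormedSpace ℝ X]
    [NormedAddCommGroup Y] [NormedSpace ℝ Y]
    (A : X →L[ℝ] Y)
    (P : X →L[ℝ] X) (hP : LinearMap.range (P : X →ₗ[ℝ] X) ≤ LinearMap.ker (A : X →ₗ[ℝ] Y))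
    (U : X → X) (L : NNReal) (hU : LipschitzWith L U)
    (f : X → X) (hf : ∀ x : X, f x = x + P (U x))
    (D₀ : Set X)
    (Bfam : ℝ → Y → X)
    (hreg : ∀ x₀ ∈ D₀, ∀ ε : ℝ, 0 < ε → ∃ δ₀ > 0, ∀ δ : ℝ, 0 < δ → δ ≤ δ₀ →
      ∀ yδ : Y, ‖A x₀ - yδ‖ ≤ δ → ‖x₀ - Bfam δ yδ‖ ≤ ε) :
    ∀ x ∈ f '' D₀, ∀ ε : ℝ, 0 < ε → ∃ δ₀ > 0, ∀ δ : ℝ, 0 < δ → δ ≤ δ₀ →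
      ∀ yδ : Y, ‖A x - yδ‖ ≤ δ → ‖x - f (Bfam δ yδ)‖ ≤ ε := by
  have hf_unif : UniformContinuous f := by
    rw [funext hf]
    exact (LipschitzWith.id.add (P.lipschitz.comp hU)).uniformContinuous
  have hAf : ∀ x ∈ D₀, A (f x) = A x := fun x _ => by
    rw [hf x, ContinuousLinearMap.apply_add_of_range_le_ker hP]
  exact IsRegularizationMethod.comp_uniformContinuous hreg hf_unif hAf

/-- Learned regularization: if `(𝓑_δ)` is a regularization method on `D₀ ⊆ B(ran A)`
(with `B` a right inverse of `A`) and `f = id + P ∘ U` is a (Lipschitz) null-space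
network, then `(f ∘ 𝓑_δ)` is a regularization method on the signal class `f(D₀)`. -/
theorem stmt_12
    {X Y : Type*} [NormedAddCommGroup X] [NormedSpace ℝ X] [CompleteSpace X]
    [NormedAddCommGroup Y] [NormedSpace ℝ Y] [CompleteSpace Y]
    (A : X →L[ℝ] Y)
    (P : X →L[ℝ] X) (hP : LinearMap.range (P : X →ₗ[ℝ] X) ≤ LinearMap.ker (A : X →ₗ[ℝ] Y))
    (U : X → X) (L : NNReal) (hU : LipschitzWith L U)
    (f : X → X) (hf : ∀ x : X, f x = x + P (U x))
    (B : LinearMap.range (A : X →ₗ[ℝ] Y) → X)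
    (hB : ∀ y : LinearMap.range (A : X →ₗ[ℝ] Y), A (B y) = (y : Y))
    (D₀ : Set X) (hD₀ : D₀ ⊆ Set.range B)
    (Bfam : ℝ → Y → X)
    (hreg : ∀ x₀ ∈ D₀, ∀ ε : ℝ, 0 < ε → ∃ δ₀ > 0, ∀ δ : ℝ, 0 < δ → δ ≤ δ₀ →
      ∀ yδ : Y, ‖A x₀ - yδ‖ ≤ δ → ‖x₀ - Bfam δ yδ‖ ≤ ε) :
    ∀ x ∈ f '' D₀, ∀ ε : ℝ, 0 < ε → ∃ δ₀ > 0, ∀ δ : ℝ, 0 < δ → δ ≤ δ₀ →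
      ∀ yδ : Y, ‖A x - yδ‖ ≤ δ → ‖x - f (Bfam δ yδ)‖ ≤ ε :=
  stmt_12_general A P hP U L hU f hf D₀ Bfam hreg
end

section
/- Let H and K be real Hilbert spaces, A : H → K a nonzero bounded linear operator, μ > 0, ρ > 0, c₁, c₂ > 0, and let (g_α)_{α>0} be continuous functions g_α : [0, ‖A*A‖] → ℝ satisfying (R1) λ^μ |1 − λ g_α(λ)| ≤ c₁ α^μ for all α > 0 and λ ∈ [0, ‖A*A‖], and (R2) sup_λ |g_α(λ)| ≤ c₂/α for all α > 0. Let α⋆ : (0,∞) → (0,∞) satisfy d₁ (δ/ρ)^{2/(2μ+1)} ≤ α⋆(δ) ≤ d₂ (δ/ρ)^{2/(2μ+1)} for constants d₁, d₂ > 0. Let P : H → H be the orthogonal projection onto ker(A), U : H → H Lipschitz continuous, and f = id_H + P∘U. Then there exists c > 0 such that for every w ∈ H with ‖w‖ ≤ ρ, setting x = f((A*A)^μ w), and for every δ > 0 and y^δ ∈ K with ‖A x − y^δ‖ ≤ δ, one has ‖f(g_{α⋆(δ)}(A*A)(A* y^δ)) − x‖ ≤ c δ^{2μ/(2μ+1)}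 ρ^{1/(2μ+1)}. -/
/-!
Write `B = A* A`, `b = B^μ w` and `u = g_α(B) A* y^δ`. Since `P` maps into `ker A`, `A x = A b`,
so `u - b = g_α(B) A* (y^δ - A b) + (g_α(B) B - 1) B^μ w`. By the C*-identity
`‖g_α(B) A*‖² = ‖g_α(B) B g_α(B)‖`, which is at most the supremum of `λ g_α(λ)²` over the
spectrum; (R1) and (R2) make this `≤ κ/α` with `κ = max(c₂, 1 + c₁) c₂`, and (R1) alone bounds the
second term by `c₁ α^μ ‖w‖`. As `f` is `(1 + L)`-Lipschitz,
`‖f u - x‖ = ‖f u - f b‖ ≤ (1 + L) (√(κ/α) δ + c₁ α^μ ρ)`, and the parameter choice balances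
the two terms at `δ^(2μ/(2μ+1)) ρ^(1/(2μ+1))`.
-/

open scoped NNReal
open ContinuousLinearMap

theorem abs_mul_le_max_of_rpow_mul_abs_sub_le {c₁ c₂ μ α t g : ℝ} (hc₁ : 0 ≤ c₁) (hμ : 0 ≤ μ)
    (hα : 0 < α) (ht : 0 ≤ t) (hR1 : t ^ μ * |1 - t * g| ≤ c₁ * α ^ μ) (hR2 : |g| ≤ c₂ / α) :
    |t * g| ≤ max c₂ (1 + c₁) := by
  rcases le_total t α with htα | hαt
  · calc |t * g| = t * |g| := by rw [abs_mul, abs_of_nonneg ht]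
      _ ≤ α * (c₂ / α) := mul_le_mul htα hR2 (abs_nonneg g) hα.le
      _ = c₂ := mul_div_cancel₀ c₂ hα.ne'
      _ ≤ max c₂ (1 + c₁) := le_max_left _ _
  · have htμ : 0 < t ^ μ := Real.rpow_pos_of_pos (hα.trans_le hαt) μ
    have hαμ : α ^ μ ≤ t ^ μ := Real.rpow_le_rpow hα.le hαt hμ
    have h1 : |1 - t * g| ≤ c₁ :=
      le_of_mul_le_mul_left (by nlinarith [mul_le_mul_of_nonneg_left hαμ hc₁]) htμ
    calc |t * g| ≤ 1 + |1 - t * g| := by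
          have := abs_sub_abs_le_abs_sub (t * g) 1
          rw [abs_one, abs_sub_comm] at this
          linarith
      _ ≤ max c₂ (1 + c₁) := le_max_of_le_right (by linarith)

theorem sqrt_div_mul_add_mul_rpow_mul_le {κ c₁ d₁ d₂ μ ρ δ α : ℝ} (hκ : 0 ≤ κ) (hc₁ : 0 ≤ c₁)
    (hd₁ : 0 < d₁) (hd₂ : 0 ≤ d₂) (hμ : 0 ≤ μ) (hρ : 0 < ρ) (hδ : 0 < δ)
    (hα₁ : d₁ * (δ / ρ) ^ (2 / (2 * μ + 1)) ≤ α) (hα₂ : α ≤ d₂ * (δ / ρ) ^ (2 / (2 * μ + 1))) :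
    √(κ / α) * δ + c₁ * α ^ μ * ρ ≤
      (√(κ / d₁) + c₁ * d₂ ^ μ) * (δ ^ (2 * μ / (2 * μ + 1)) * ρ ^ (1 / (2 * μ + 1))) := by
  set q := (δ / ρ) ^ (2 / (2 * μ + 1))
  have hq : 0 < q := by positivity
  have hp : 2 * μ + 1 ≠ 0 := by positivity
  have hδ' : δ ^ (2 * μ / (2 * μ + 1)) = δ / δ ^ (1 / (2 * μ + 1)) := by
    rw [eq_div_iff (by positivity), ← Real.rpow_add hδ, ← add_div, div_self hp, Real.rpow_one]
  have hρ' : ρ ^ (1 / (2 * μ + 1)) = ρ / ρ ^ (2 * μ / (2 * μ + 1)) := by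
    rw [eq_div_iff (by positivity), ← Real.rpow_add hρ, ← add_div, add_comm, div_self hp,
      Real.rpow_one]
  have hsqrt : δ / √q = δ ^ (2 * μ / (2 * μ + 1)) * ρ ^ (1 / (2 * μ + 1)) := by
    rw [Real.sqrt_eq_rpow, ← Real.rpow_mul (by positivity), Real.div_rpow hδ.le hρ.le, hδ']
    field_simp
  have hpow : q ^ μ * ρ = δ ^ (2 * μ / (2 * μ + 1)) * ρ ^ (1 / (2 * μ + 1)) := by
    rw [← Real.rpow_mul (by positivity), Real.div_rpow hδ.le hρ.le, hρ']
    field_simp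
  have hα : 0 < α := lt_of_lt_of_le (by positivity) hα₁
  calc √(κ / α) * δ + c₁ * α ^ μ * ρ
      ≤ √(κ / (d₁ * q)) * δ + c₁ * (d₂ * q) ^ μ * ρ := by gcongr
    _ = √(κ / d₁) * (δ / √q) + c₁ * d₂ ^ μ * (q ^ μ * ρ) := by
      rw [Real.mul_rpow hd₂ hq.le, ← div_div, Real.sqrt_div' _ hq.le]
      ring
    _ = _ := by rw [hsqrt, hpow]; ring

theorem LipschitzWith.id_add_orthogonalProjectionOnto_comp {𝕜 H : Type*} [RCLike 𝕜]
    [NormedAddCommGroup H] [InnerProductSpace 𝕜 H] {U : H → H} {L : ℝ≥0}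
    (hU : LipschitzWith L U) (V : Submodule 𝕜 H) [V.HasOrthogonalProjection] :
    LipschitzWith (1 + L) fun x ↦ x + (V.orthogonalProjectionOnto (U x) : H) := by
  simpa using LipschitzWith.id.add
    ((LipschitzWith.subtype_val _).comp (V.lipschitzWith_orthogonalProjectionOnto.comp hU))

namespace ContinuousLinearMap

variable {H K : Type*} [NormedAddCommGroup H] [InnerProductSpace ℝ H] [CompleteSpace H]
  [NormedAddCommGroup K] [InnerProductSpace ℝ K] [CompleteSpace K]

theorem IsPositive.spectrum_subset_Icc {T : H →L[ℝ] H} (hT : T.IsPositive) :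
    spectrum ℝ T ⊆ Set.Icc 0 ‖T‖ := by
  nontriviality H
  intro t ht
  exact ⟨SpectrumRestricts.nnreal_iff.mp hT.spectrumRestricts t ht,
    (le_abs_self t).trans (spectrum.norm_le_norm_of_mem ht)⟩

variable [ContinuousFunctionalCalculus ℝ (H →L[ℝ] H) IsSelfAdjoint]

/-- The functional calculus is not assumed isometric; the bound comes from the fact that the norm
of a self-adjoint operator is its spectral radius. -/
theorem norm_cfc_le {h : ℝ → ℝ} {S : H →L[ℝ] H} {M : ℝ} (hM : 0 ≤ M)
    (hh : ∀ t ∈ spectrum ℝ S, |h t| ≤ M) : ‖cfc h S‖ ≤ M := by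
  refine cfc_cases (‖·‖ ≤ M) S h (by simpa) fun hc hS ↦ ?_
  rw [← cfc_apply h S]
  have hρ : spectralRadius ℝ (cfc h S) ≤ M.toNNReal := by
    rw [spectralRadius, cfc_map_spectrum h S]
    refine iSup₂_le fun _ ⟨t, ht, hte⟩ ↦ ?_
    rw [← hte, ENNReal.coe_le_coe, Real.le_toNNReal_iff_coe_le hM, coe_nnnorm, Real.norm_eq_abs]
    exact hh t ht
  rw [spectralRadius_eq_nnnorm _ (cfc_predicate h S), ENNReal.coe_le_coe] at hρ
  simpa [hM] using NNReal.coe_le_coe.mpr hρ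

theorem norm_cfc_comp_adjoint_le (A : H →L[ℝ] K) {g : ℝ → ℝ}
    (hg : ContinuousOn g (spectrum ℝ (adjoint A ∘L A))) {M : ℝ} (hM : 0 ≤ M)
    (hbd : ∀ t ∈ spectrum ℝ (adjoint A ∘L A), |g t * (t * g t)| ≤ M) :
    ‖cfc g (adjoint A ∘L A) ∘L adjoint A‖ ≤ √M := by
  have hB : IsSelfAdjoint (adjoint A ∘L A) := (isPositive_adjoint_comp_self A).isSelfAdjoint
  set R := cfc g (adjoint A ∘L A)
  have hR : adjoint R = R := isSelfAdjoint_iff'.mp (cfc_predicate g _)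
  have hRBR : adjoint (A ∘L R) ∘L (A ∘L R) = cfc (fun t ↦ g t * (t * g t)) (adjoint A ∘L A) := by
    rw [cfc_mul g _ _ hg, cfc_mul (fun t ↦ t) g _ continuousOn_id hg, cfc_id' ℝ (adjoint A ∘L A),
      adjoint_comp, hR]
    rfl
  rw [Real.le_sqrt (norm_nonneg _) hM]
  calc ‖R ∘L adjoint A‖ ^ 2 = ‖A ∘L R‖ * ‖A ∘L R‖ := by
        rw [← hR, ← adjoint_comp, LinearIsometryEquiv.norm_map, sq, hR]
    _ = ‖cfc (fun t ↦ g t * (t * g t)) (adjoint A ∘L A)‖ := by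
        rw [← hRBR, norm_adjoint_comp_self]
    _ ≤ M := norm_cfc_le hM hbd

theorem cfc_adjoint_sub_cfc_rpow_eq (A : H →L[ℝ] K) {g : ℝ → ℝ} {μ : ℝ} (hμ : 0 ≤ μ)
    (hg : ContinuousOn g (spectrum ℝ (adjoint A ∘L A))) (w : H) (y : K) :
    cfc g (adjoint A ∘L A) (adjoint A y) - cfc (fun t : ℝ ↦ t ^ μ) (adjoint A ∘L A) w =
      (cfc g (adjoint A ∘L A) ∘L adjoint A) (y - A (cfc (fun t : ℝ ↦ t ^ μ) (adjoint A ∘L A) w)) +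
        cfc (fun t ↦ (g t * t - 1) * t ^ μ) (adjoint A ∘L A) w := by
  set B := adjoint A ∘L A
  have hB : IsSelfAdjoint B := (isPositive_adjoint_comp_self A).isSelfAdjoint
  have hpow : ContinuousOn (fun t : ℝ ↦ t ^ μ) (spectrum ℝ B) :=
    (Real.continuous_rpow_const hμ).continuousOn
  have hgt : ContinuousOn (fun t ↦ g t * t) (spectrum ℝ B) := hg.mul continuousOn_id
  have hresidual : cfc (fun t ↦ (g t * t - 1) * t ^ μ) B =
      (cfc g B * B - 1) * cfc (fun t : ℝ ↦ t ^ μ) B := by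
    rw [cfc_mul (fun t ↦ g t * t - 1) (fun t ↦ t ^ μ) B (hgt.sub continuousOn_const) hpow,
      cfc_sub (fun t ↦ g t * t) (fun _ ↦ 1) B hgt, cfc_const_one ℝ B,
      cfc_mul g (fun t ↦ t) B hg continuousOn_id, cfc_id' ℝ B]
  have hB_apply (v : H) : B v = adjoint A (A v) := rfl
  rw [hresidual, mul_apply_eq_comp, sub_apply, mul_apply_eq_comp, hB_apply, one_apply_eq_self,
    comp_apply, map_sub, map_sub]
  abel

theorem norm_cfc_adjoint_sub_cfc_rpow_le (A : H →L[ℝ] K) {g : ℝ → ℝ}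
    {μ α c₁ c₂ : ℝ} (hμ : 0 ≤ μ) (hα : 0 < α) (hc₁ : 0 ≤ c₁) (hc₂ : 0 ≤ c₂)
    (hg : ContinuousOn g (spectrum ℝ (adjoint A ∘L A)))
    (hR1 : ∀ t ∈ spectrum ℝ (adjoint A ∘L A), t ^ μ * |1 - t * g t| ≤ c₁ * α ^ μ)
    (hR2 : ∀ t ∈ spectrum ℝ (adjoint A ∘L A), |g t| ≤ c₂ / α) (w : H) (y : K) :
    ‖cfc g (adjoint A ∘L A) (adjoint A y) - cfc (fun t : ℝ ↦ t ^ μ) (adjoint A ∘L A) w‖ ≤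
      √(max c₂ (1 + c₁) * c₂ / α) * ‖y - A (cfc (fun t : ℝ ↦ t ^ μ) (adjoint A ∘L A) w)‖ +
        c₁ * α ^ μ * ‖w‖ := by
  have hspec : ∀ t ∈ spectrum ℝ (adjoint A ∘L A), 0 ≤ t := fun t ht ↦
    ((isPositive_adjoint_comp_self A).spectrum_subset_Icc ht).1
  have hdata : ‖cfc g (adjoint A ∘L A) ∘L adjoint A‖ ≤ √(max c₂ (1 + c₁) * c₂ / α) := by
    have hmax : 0 ≤ max c₂ (1 + c₁) := le_max_of_le_left hc₂
    refine norm_cfc_comp_adjoint_le A hg (by positivity) fun t ht ↦ ?_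
    calc |g t * (t * g t)| = |t * g t| * |g t| := by rw [abs_mul, mul_comm]
      _ ≤ max c₂ (1 + c₁) * (c₂ / α) :=
          mul_le_mul (abs_mul_le_max_of_rpow_mul_abs_sub_le hc₁ hμ hα (hspec t ht) (hR1 t ht)
            (hR2 t ht)) (hR2 t ht) (abs_nonneg _) hmax
      _ = max c₂ (1 + c₁) * c₂ / α := (mul_div_assoc _ _ _).symm
  have happrox : ‖cfc (fun t ↦ (g t * t - 1) * t ^ μ) (adjoint A ∘L A)‖ ≤ c₁ * α ^ μ := by
    refine norm_cfc_le (by positivity) fun t ht ↦ ?_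
    rw [abs_mul, abs_of_nonneg (Real.rpow_nonneg (hspec t ht) μ), mul_comm, abs_sub_comm,
      mul_comm (g t)]
    exact hR1 t ht
  rw [cfc_adjoint_sub_cfc_rpow_eq A hμ hg]
  refine (norm_add_le_of_le (le_opNorm _ _) (le_opNorm _ _)).trans ?_
  gcongr

end ContinuousLinearMap

theorem stmt_13_general
    {H K : Type*} [NormedAddCommGroup H] [InnerProductSpace ℝ H] [CompleteSpace H]
    [NormedAddCommGroup K] [InnerProductSpace ℝ K] [CompleteSpace K]
    [ContinuousFunctionalCalculus ℝ (H →L[ℝ] H) IsSelfAdjoint]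
    (A : H →L[ℝ] K)
    (μ ρ c₁ c₂ : ℝ) (hμ : 0 < μ) (hρ : 0 < ρ) (hc₁ : 0 < c₁) (hc₂ : 0 < c₂)
    (g : ℝ → ℝ → ℝ)
    (hgcont : ∀ α : ℝ, 0 < α →
      ContinuousOn (g α) (Set.Icc 0 ‖ContinuousLinearMap.adjoint A ∘L A‖))
    (hR1 : ∀ α : ℝ, 0 < α → ∀ lam ∈ Set.Icc 0 ‖ContinuousLinearMap.adjoint A ∘L A‖,
      lam ^ μ * |1 - lam * g α lam| ≤ c₁ * α ^ μ)
    (hR2 : ∀ α : ℝ, 0 < α → ∀ lam ∈ Set.Icc 0 ‖ContinuousLinearMap.adjoint A ∘L A‖,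
      |g α lam| ≤ c₂ / α)
    (αstar : ℝ → ℝ) (d₁ d₂ : ℝ) (hd₁ : 0 < d₁) (hd₂ : 0 < d₂)
    (hαstar : ∀ δ : ℝ, 0 < δ →
      d₁ * (δ / ρ) ^ (2 / (2 * μ + 1)) ≤ αstar δ ∧
      αstar δ ≤ d₂ * (δ / ρ) ^ (2 / (2 * μ + 1)))
    (U : H → H) (L : NNReal) (hU : LipschitzWith L U)
    (f : H → H)
    (hf : ∀ x : H, f x = x + (Submodule.orthogonalProjectionOnto (LinearMap.ker (A : H →ₗ[ℝ] K)) (U x) : H)) :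
    ∃ c : ℝ, 0 < c ∧ ∀ w : H, ‖w‖ ≤ ρ →
      ∀ x : H,
        x = f (cfc (fun t : ℝ => t ^ μ) (ContinuousLinearMap.adjoint A ∘L A) w) →
        ∀ δ : ℝ, 0 < δ → ∀ yδ : K, ‖A x - yδ‖ ≤ δ →
          ‖f (cfc (g (αstar δ)) (ContinuousLinearMap.adjoint A ∘L A)
              (ContinuousLinearMap.adjoint A yδ)) - x‖ ≤
            c * δ ^ (2 * μ / (2 * μ + 1)) * ρ ^ (1 / (2 * μ + 1)) := by
  have hspec := (isPositive_adjoint_comp_self A).spectrum_subset_Icc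
  have hf_lip : LipschitzWith (1 + L) f :=
    funext hf ▸ hU.id_add_orthogonalProjectionOnto_comp (LinearMap.ker (A : H →ₗ[ℝ] K))
  set κ := max c₂ (1 + c₁) * c₂
  refine ⟨(1 + L) * (√(κ / d₁) + c₁ * d₂ ^ μ), by positivity, ?_⟩
  rintro w hw x rfl δ hδ yδ hy
  obtain ⟨hα₁, hα₂⟩ := hαstar δ hδ
  have hα : 0 < αstar δ := lt_of_lt_of_le (by positivity) hα₁
  set b := cfc (fun t : ℝ => t ^ μ) (adjoint A ∘L A) w
  have hAf : A (f b) = A b := by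
    rw [hf, map_add]
    exact add_eq_left.mpr (LinearMap.mem_ker.mp (Submodule.coe_mem _))
  have hdata : ‖yδ - A b‖ ≤ δ := by rwa [← hAf, norm_sub_rev]
  have hreg := norm_cfc_adjoint_sub_cfc_rpow_le A hμ.le hα hc₁.le hc₂.le
    ((hgcont _ hα).mono hspec) (fun t ht ↦ hR1 _ hα t (hspec ht))
    (fun t ht ↦ hR2 _ hα t (hspec ht)) w yδ
  calc ‖f (cfc (g (αstar δ)) (adjoint A ∘L A) (adjoint A yδ)) - f b‖
      ≤ (1 + L) * ‖cfc (g (αstar δ)) (adjoint A ∘L A) (adjoint A yδ) - b‖ := by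
        simpa only [dist_eq_norm, NNReal.coe_add, NNReal.coe_one] using hf_lip.dist_le_mul _ _
    _ ≤ (1 + L) * (√(κ / αstar δ) * δ + c₁ * αstar δ ^ μ * ρ) := by
        gcongr
        exact hreg.trans (by gcongr)
    _ ≤ (1 + L) * ((√(κ / d₁) + c₁ * d₂ ^ μ) *
          (δ ^ (2 * μ / (2 * μ + 1)) * ρ ^ (1 / (2 * μ + 1)))) := by
        gcongr
        exact sqrt_div_mul_add_mul_rpow_mul_le (by positivity) hc₁.le hd₁ hd₂.le hμ.le hρ hδ hα₁ hα₂
    _ = _ := by ring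

/-- Convergence rates for learned regularizations: for a regularizing filter
`(g_α)` satisfying (R1) `λ^μ |1 - λ g_α(λ)| ≤ c₁ α^μ` and (R2) `‖g_α‖_∞ ≤ c₂/α`
on `[0, ‖A*A‖]`, a parameter choice `α⋆(δ) ≍ (δ/ρ)^(2/(2μ+1))`, and a null-space
network `f = id + P_{ker A} ∘ U`, there is `c > 0` such that for every
`x = f((A*A)^μ w)` with `‖w‖ ≤ ρ` and every `y^δ` with `‖A x - y^δ‖ ≤ δ`,
`‖f(g_{α⋆(δ)}(A*A)(A* y^δ)) - x‖ ≤ c δ^(2μ/(2μ+1)) ρ^(1/(2μ+1))`.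
(Operator functions are taken via the continuous functional calculus of the
selfadjoint operator `A*A`; the real-scalar functional calculus instance for
bounded operators on a real Hilbert space is assumed, as it is a true fact not
yet available in Mathlib.) -/
theorem stmt_13
    {H K : Type*} [NormedAddCommGroup H] [InnerProductSpace ℝ H] [CompleteSpace H]
    [NormedAddCommGroup K] [InnerProductSpace ℝ K] [CompleteSpace K]
    [ContinuousFunctionalCalculus ℝ (H →L[ℝ] H) IsSelfAdjoint]
    (A : H →L[ℝ] K) (hA : A ≠ 0)
    (μ ρ c₁ c₂ : ℝ) (hμ : 0 < μ) (hρ : 0 < ρ) (hc₁ : 0 < c₁) (hc₂ : 0 < c₂)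
    (g : ℝ → ℝ → ℝ)
    (hgcont : ∀ α : ℝ, 0 < α →
      ContinuousOn (g α) (Set.Icc 0 ‖ContinuousLinearMap.adjoint A ∘L A‖))
    (hR1 : ∀ α : ℝ, 0 < α → ∀ lam ∈ Set.Icc 0 ‖ContinuousLinearMap.adjoint A ∘L A‖,
      lam ^ μ * |1 - lam * g α lam| ≤ c₁ * α ^ μ)
    (hR2 : ∀ α : ℝ, 0 < α → ∀ lam ∈ Set.Icc 0 ‖ContinuousLinearMap.adjoint A ∘L A‖,
      |g α lam| ≤ c₂ / α)
    (αstar : ℝ → ℝ) (d₁ d₂ : ℝ) (hd₁ : 0 < d₁) (hd₂ : 0 < d₂)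
    (hαstar : ∀ δ : ℝ, 0 < δ →
      d₁ * (δ / ρ) ^ (2 / (2 * μ + 1)) ≤ αstar δ ∧
      αstar δ ≤ d₂ * (δ / ρ) ^ (2 / (2 * μ + 1)))
    (U : H → H) (L : NNReal) (hU : LipschitzWith L U)
    (f : H → H)
    (hf : ∀ x : H, f x = x + (Submodule.orthogonalProjectionOnto (LinearMap.ker (A : H →ₗ[ℝ] K)) (U x) : H)) :
    ∃ c : ℝ, 0 < c ∧ ∀ w : H, ‖w‖ ≤ ρ →
      ∀ x : H,
        x = f (cfc (fun t : ℝ => t ^ μ) (ContinuousLinearMap.adjoint A ∘L A) w) →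
        ∀ δ : ℝ, 0 < δ → ∀ yδ : K, ‖A x - yδ‖ ≤ δ →
          ‖f (cfc (g (αstar δ)) (ContinuousLinearMap.adjoint A ∘L A)
              (ContinuousLinearMap.adjoint A yδ)) - x‖ ≤
            c * δ ^ (2 * μ / (2 * μ + 1)) * ρ ^ (1 / (2 * μ + 1)) :=
  stmt_13_general A μ ρ c₁ c₂ hμ hρ hc₁ hc₂ g hgcont hR1 hR2 αstar d₁ d₂ hd₁ hd₂ hαstar U L hU f hf
end

section
/- Let H and K be real Hilbert spaces, A : H → K a nonzero bounded linear operator, and τ a real number with 0 < τ < 2/‖A‖². Fix z ∈ H and define the Landweber iteration x₀ = z, x_{k+1} = x_k − τ A*(A x_k). Then the sequence (x_k) converges in norm to P_{ker(A)} z, the orthogonal projection of z onto ker(A). -/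
/-! With `T = 1 - τ A*A`, the estimate `‖T v‖² + τ (2 - τ ‖A‖²) ‖A v‖² ≤ ‖v‖²` makes `T` a
contraction and makes `∑ₖ ‖A Tᵏ v‖²` finite, so `A Tᵏ v → 0`. As `T` commutes with `A*A`,
`Tᵏ (A*A u) = A* (A Tᵏ u) → 0`; the iterates of `T` are equicontinuous, so this extends to the
closure of `range (A*A)`, which is `(ker A)ᗮ`. Since `T` fixes `ker A` pointwise, the
projection `P` onto `ker A` satisfies `x k - P z = Tᵏ (z - P z) → 0`. -/

open ContinuousLinearMap Filter Topology
open scoped RealInnerProductSpace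

theorem summable_of_add_le_of_nonneg {a b : ℕ → ℝ} (ha : ∀ k, 0 ≤ a k) (hb : ∀ k, 0 ≤ b k)
    (h : ∀ k, a (k + 1) + b k ≤ a k) : Summable b := by
  have hsum : ∀ n, ∑ k ∈ Finset.range n, b k + a n ≤ a 0 := by
    intro n
    induction n with
    | zero => simp
    | succ n ih => rw [Finset.sum_range_succ]; linarith [h n]
  exact summable_of_sum_range_le hb fun n ↦ by linarith [hsum n, ha n]

section Landweber

variable {E F : Type*} [NormedAddCommGroup E] [InnerProductSpace ℝ E] [CompleteSpace E]
  [NormedAddCommGroup F] [InnerProductSpace ℝ F] [CompleteSpace F]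

noncomputable def landweberStep (A : E →L[ℝ] F) (τ : ℝ) : E →L[ℝ] E :=
  1 - τ • (adjoint A ∘L A)

variable (A : E →L[ℝ] F) {τ : ℝ}

theorem landweberStep_apply (τ : ℝ) (v : E) : landweberStep A τ v = v - τ • adjoint A (A v) := rfl

theorem norm_landweberStep_apply_sq_add_le (τ : ℝ) (v : E) :
    ‖landweberStep A τ v‖ ^ 2 + τ * (2 - τ * ‖A‖ ^ 2) * ‖A v‖ ^ 2 ≤ ‖v‖ ^ 2 := by
  have hinner : ⟪v, adjoint A (A v)⟫ = ‖A v‖ ^ 2 := by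
    rw [adjoint_inner_right, real_inner_self_eq_norm_sq]
  have hnorm : ‖adjoint A (A v)‖ ≤ ‖A‖ * ‖A v‖ := by
    simpa only [LinearIsometryEquiv.norm_map] using (adjoint A).le_opNorm (A v)
  rw [landweberStep_apply, norm_sub_sq_real, real_inner_smul_right, hinner, norm_smul,
    Real.norm_eq_abs, mul_pow, sq_abs]
  nlinarith [mul_le_mul_of_nonneg_left (pow_le_pow_left₀ (norm_nonneg _) hnorm 2) (sq_nonneg τ)]

theorem lipschitzWith_landweberStep (hτ : 0 ≤ τ) (hτA : τ * ‖A‖ ^ 2 ≤ 2) :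
    LipschitzWith 1 (landweberStep A τ) := by
  refine lipschitzWith_of_opNorm_le (opNorm_le_bound _ zero_le_one fun v ↦ ?_)
  have hest := norm_landweberStep_apply_sq_add_le A τ v
  have hdefect : 0 ≤ τ * (2 - τ * ‖A‖ ^ 2) * ‖A v‖ ^ 2 := by
    have := sub_nonneg.2 hτA
    positivity
  rw [NNReal.coe_one, one_mul]
  exact pow_le_pow_iff_left₀ (norm_nonneg _) (norm_nonneg _) two_ne_zero |>.1 (by linarith)

theorem landweberStep_apply_of_mem_ker {v : E} (hv : A v = 0) : landweberStep A τ v = v := by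
  simp [landweberStep_apply, hv]

theorem commute_landweberStep_adjoint_comp_self (τ : ℝ) :
    Function.Commute (landweberStep A τ) (adjoint A ∘L A) := fun v ↦ by
  simp only [landweberStep_apply, coe_comp, Function.comp_apply, map_sub, map_smul]

theorem summable_norm_apply_landweberStep_iterate_sq (hτ : 0 < τ) (hτA : τ * ‖A‖ ^ 2 < 2) (v : E) :
    Summable fun k ↦ ‖A ((landweberStep A τ)^[k] v)‖ ^ 2 := by
  have hc : 0 < τ * (2 - τ * ‖A‖ ^ 2) := mul_pos hτ (by linarith)
  refine (summable_mul_left_iff hc.ne').1 <| summable_of_add_le_of_nonneg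
    (a := fun k ↦ ‖(landweberStep A τ)^[k] v‖ ^ 2) (fun _ ↦ by positivity) (fun _ ↦ by positivity)
    fun k ↦ ?_
  simpa only [Function.iterate_succ_apply'] using norm_landweberStep_apply_sq_add_le A τ _

theorem tendsto_apply_landweberStep_iterate (hτ : 0 < τ) (hτA : τ * ‖A‖ ^ 2 < 2) (v : E) :
    Tendsto (fun k ↦ A ((landweberStep A τ)^[k] v)) atTop (𝓝 0) := by
  have hsq := (summable_norm_apply_landweberStep_iterate_sq A hτ hτA v).tendsto_atTop_zero.sqrt
  rw [Real.sqrt_zero] at hsq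
  exact tendsto_zero_iff_norm_tendsto_zero.2 <| hsq.congr fun k ↦ Real.sqrt_sq (norm_nonneg _)

theorem tendsto_landweberStep_iterate_of_mem_orthogonal_ker (hτ : 0 < τ) (hτA : τ * ‖A‖ ^ 2 < 2)
    {w : E} (hw : w ∈ (A : E →ₗ[ℝ] F).kerᗮ) :
    Tendsto (fun k ↦ (landweberStep A τ)^[k] w) atTop (𝓝 0) := by
  set S := adjoint A ∘L A
  have hclosed : IsClosed {w | Tendsto (fun k ↦ (landweberStep A τ)^[k] w) atTop (𝓝 0)} := by
    refine Equicontinuous.isClosed_setOfPred_tendsto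
      (LipschitzWith.uniformEquicontinuous _ 1 fun k ↦ ?_).equicontinuous continuous_const
    simpa only [one_pow] using (lipschitzWith_landweberStep A hτ.le hτA.le).iterate k
  have hrange : Set.range S ⊆ {w | Tendsto (fun k ↦ (landweberStep A τ)^[k] w) atTop (𝓝 0)} := by
    rintro _ ⟨u, rfl⟩
    have hcomm k : (landweberStep A τ)^[k] (S u) = adjoint A (A ((landweberStep A τ)^[k] u)) :=
      (commute_landweberStep_adjoint_comp_self A τ).iterate_left k u
    simpa only [Set.mem_ofPred_eq, hcomm, map_zero, Function.comp_def] using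
      ((adjoint A).continuous.tendsto 0).comp (tendsto_apply_landweberStep_iterate A hτ hτA u)
  have hker : (A : E →ₗ[ℝ] F).kerᗮ = (S : E →ₗ[ℝ] E).range.topologicalClosure := by
    rw [← ker_adjoint_comp_self, orthogonal_ker, adjoint_comp, adjoint_adjoint]
  rw [hker, ← SetLike.mem_coe, Submodule.topologicalClosure_coe] at hw
  exact closure_minimal hrange hclosed hw

end Landweber

theorem stmt_15_general
    {H K : Type*} [NormedAddCommGroup H] [InnerProductSpace ℝ H] [CompleteSpace H]
    [NormedAddCommGroup K] [InnerProductSpace ℝ K] [CompleteSpace K]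
    (A : H →L[ℝ] K)
    (τ : ℝ) (hτpos : 0 < τ) (hτlt : τ < 2 / ‖A‖ ^ 2)
    (z : H) (x : ℕ → H) (hx0 : x 0 = z)
    (hxrec : ∀ k : ℕ, x (k + 1) = x k - τ • (ContinuousLinearMap.adjoint A (A (x k)))) :
    Filter.Tendsto x Filter.atTop
      (nhds ((Submodule.orthogonalProjectionOnto (LinearMap.ker (A : H →ₗ[ℝ] K)) z : H))) := by
  have hτA : τ * ‖A‖ ^ 2 < 2 := by
    rcases (sq_nonneg ‖A‖).eq_or_lt with hA | hA
    · simp [← hA]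
    · exact (lt_div_iff₀ hA).1 hτlt
  have hx : x = fun k ↦ (landweberStep A τ)^[k] z := by
    funext k
    induction k with
    | zero => exact hx0
    | succ k ih => rw [hxrec, ih, Function.iterate_succ_apply', landweberStep_apply]
  have hfix : ∀ k, (landweberStep A τ)^[k] ((A : H →ₗ[ℝ] K).ker.starProjection z) =
      (A : H →ₗ[ℝ] K).ker.starProjection z :=
    Function.iterate_fixed (landweberStep_apply_of_mem_ker A
      (LinearMap.mem_ker.1 (Submodule.starProjection_apply_mem _ z)))
  have hdecay := tendsto_landweberStep_iterate_of_mem_orthogonal_ker A hτpos hτA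
    (Submodule.sub_starProjection_mem_orthogonal z)
  rw [Submodule.coe_orthogonalProjectionOnto_apply, hx, ← tendsto_sub_nhds_zero_iff]
  simpa only [iterate_map_sub, hfix] using hdecay

/-- Landweber iteration `x₀ = z`, `x_{k+1} = x_k - τ A*(A x_k)` with
`0 < τ < 2/‖A‖²` converges in norm to the orthogonal projection of `z`
onto `ker A`. -/
theorem stmt_15
    {H K : Type*} [NormedAddCommGroup H] [InnerProductSpace ℝ H] [CompleteSpace H]
    [NormedAddCommGroup K] [InnerProductSpace ℝ K] [CompleteSpace K]
    (A : H →L[ℝ] K) (hA : A ≠ 0)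
    (τ : ℝ) (hτpos : 0 < τ) (hτlt : τ < 2 / ‖A‖ ^ 2)
    (z : H) (x : ℕ → H) (hx0 : x 0 = z)
    (hxrec : ∀ k : ℕ, x (k + 1) = x k - τ • (ContinuousLinearMap.adjoint A (A (x k)))) :
    Filter.Tendsto x Filter.atTop
      (nhds ((Submodule.orthogonalProjectionOnto (LinearMap.ker (A : H →ₗ[ℝ] K)) z : H))) :=
  stmt_15_general A τ hτpos hτlt z x hx0 hxrec
end

section
/- Let X be a reflexive, strictly convex real Banach space satisfying the Radon–Riesz property, Y a real Banach space, A : X → Y a bounded linear operator, and let p, q > 1 and α > 0. Then for every y ∈ Y the Tikhonov functional x ↦ ‖A x − y‖^p + α ‖x‖^q has a unique minimizer B_α(y) ∈ X, and the resulting map B_α : Y → X is continuous. -/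
/-!
Existence: the functional is lower semicontinuous for the weak topology and coercive, and closed
balls of a reflexive space are weakly compact. Uniqueness: in a strictly convex space `‖·‖ ^ q` is
strictly convex. Continuity: if `yₖ → y`, the minimizers `B yₖ` stay bounded, and every weak
cluster point of them minimizes the functional for `y`, hence equals `B y`; so `B yₖ ⇀ B y`.
Both terms of the functional are jointly lower semicontinuous in (weak `x`, strong `y`) and their
sum converges to its value at `(B y, y)`, so neither term can jump: `‖B yₖ‖ → ‖B y‖`, and the
Radon–Riesz property turns weak convergence into norm convergence.
-/

open Filter Topology Set NormedSpace

section Semicontinuity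

variable {Z ι : Type*} [TopologicalSpace Z] {l : Filter ι}

theorem LowerSemicontinuous.rpow_const {f : Z → ℝ} (hf : LowerSemicontinuous f)
    (hf₀ : ∀ z, 0 ≤ f z) {r : ℝ} (hr : 0 ≤ r) : LowerSemicontinuous fun z => f z ^ r := by
  have hcont : Continuous fun t : ℝ => max t 0 ^ r :=
    (continuous_id.max continuous_const).rpow_const fun _ => Or.inr hr
  have hmono : Monotone fun t : ℝ => max t 0 ^ r := fun a b hab =>
    Real.rpow_le_rpow (le_max_right _ _) (max_le_max_right 0 hab) hr
  have hmax : ∀ z, max (f z) 0 = f z := fun z => max_eq_left (hf₀ z)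
  simpa only [Function.comp_def, hmax] using hcont.comp_lowerSemicontinuous hf hmono

theorem LowerSemicontinuous.const_mul {f : Z → ℝ} (hf : LowerSemicontinuous f) {c : ℝ}
    (hc : 0 ≤ c) : LowerSemicontinuous fun z => c * f z :=
  (continuous_const_mul c).comp_lowerSemicontinuous hf (monotone_mul_left_of_nonneg hc)

theorem LowerSemicontinuous.le_of_mapClusterPt {f : Z → ℝ} (hf : LowerSemicontinuous f)
    {u : ι → Z} {z : Z} (hz : MapClusterPt z l u) {v : ι → ℝ} {m : ℝ}
    (hfv : ∀ᶠ i in l, f (u i) ≤ v i) (hv : Tendsto v l (𝓝 m)) : f z ≤ m := by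
  by_contra! h
  obtain ⟨t, hmt, htz⟩ := exists_between h
  obtain ⟨i, hti, hfvi, hvi⟩ :=
    ((hz.frequently (hf z t htz)).and_eventually (hfv.and (hv.eventually (gt_mem_nhds hmt)))).exists
  linarith

/-- Neither summand can jump up at the limit, since the other one cannot jump down. -/
theorem LowerSemicontinuous.tendsto_of_add_le {f g : Z → ℝ} (hf : LowerSemicontinuous f)
    (hg : LowerSemicontinuous g) {u : ι → Z} {z : Z} (hu : Tendsto u l (𝓝 z)) {v : ι → ℝ}
    (hfgv : ∀ᶠ i in l, f (u i) + g (u i) ≤ v i) (hv : Tendsto v l (𝓝 (f z + g z))) :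
    Tendsto (fun i => g (u i)) l (𝓝 (g z)) := by
  refine tendsto_order.2 ⟨fun a ha => hu.eventually (hg z a ha), fun b hb => ?_⟩
  set ε := (b - g z) / 2 with hε
  filter_upwards [hu.eventually (hf z (f z - ε) (by linarith [hε])), hfgv,
    hv.eventually (gt_mem_nhds (show f z + g z < f z + g z + ε by linarith [hε]))] with i h₁ h₂ h₃
  linarith [hε]

end Semicontinuity

theorem MapClusterPt.prodMk_of_tendsto {X Y ι : Type*} [TopologicalSpace X] [TopologicalSpace Y]
    {l : Filter ι} {u : ι → X} {v : ι → Y} {x : X} {y : Y} (hu : MapClusterPt x l u)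
    (hv : Tendsto v l (𝓝 y)) : MapClusterPt (x, y) l fun i => (u i, v i) := by
  refine mapClusterPt_iff_frequently.2 fun s hs => ?_
  obtain ⟨U, hU, V, hV, hUV⟩ := mem_nhds_prod_iff.1 hs
  exact ((mapClusterPt_iff_frequently.1 hu U hU).and_eventually (hv hV)).mono
    fun i hi => hUV ⟨hi.1, hi.2⟩

theorem lowerSemicontinuous_norm_of_continuous_dual {Z E : Type*} [TopologicalSpace Z]
    [NormedAddCommGroup E] [NormedSpace ℝ E] {L : Z → E}
    (hL : ∀ ψ : StrongDual ℝ E, Continuous fun z => ψ (L z)) :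
    LowerSemicontinuous fun z => ‖L z‖ := by
  intro z a ha
  obtain ⟨ψ, hψ₁, hψz⟩ := exists_dual_vector'' ℝ (L z)
  have hψa : a < ψ (L z) := by simpa [hψz] using ha
  filter_upwards [(hL ψ).continuousAt.eventually (lt_mem_nhds hψa)] with z' hz'
  calc a < ψ (L z') := hz'
    _ ≤ ‖ψ (L z')‖ := le_abs_self _
    _ ≤ 1 * ‖L z'‖ := ψ.le_of_opNorm_le hψ₁ _
    _ = ‖L z'‖ := one_mul _

section Convexity

variable {E : Type*} [NormedAddCommGroup E] [NormedSpace ℝ E] {r : ℝ}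

theorem norm_combo_le (x y : E) {a b : ℝ} (ha : 0 ≤ a) (hb : 0 ≤ b) :
    ‖a • x + b • y‖ ≤ a * ‖x‖ + b * ‖y‖ :=
  (norm_add_le _ _).trans_eq (by rw [norm_smul_of_nonneg ha, norm_smul_of_nonneg hb])

theorem convexOn_norm_rpow (hr : 1 ≤ r) : ConvexOn ℝ univ fun x : E => ‖x‖ ^ r := by
  refine ⟨convex_univ, fun x _ y _ a b ha hb hab => ?_⟩
  calc ‖a • x + b • y‖ ^ r ≤ (a * ‖x‖ + b * ‖y‖) ^ r := by gcongr; exact norm_combo_le x y ha hb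
    _ ≤ a • ‖x‖ ^ r + b • ‖y‖ ^ r :=
        (convexOn_rpow hr).2 (norm_nonneg x) (norm_nonneg y) ha hb hab

/-- When `‖x‖ = ‖y‖`, strict convexity of the space makes the combination strictly shorter;
otherwise strict convexity of `t ↦ t ^ r` does the job. -/
theorem strictConvexOn_norm_rpow [StrictConvexSpace ℝ E] (hr : 1 < r) :
    StrictConvexOn ℝ univ fun x : E => ‖x‖ ^ r := by
  refine ⟨convex_univ, fun x _ y _ hxy a b ha hb hab => ?_⟩
  simp only [smul_eq_mul]
  rcases eq_or_ne ‖x‖ ‖y‖ with hn | hn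
  · calc ‖a • x + b • y‖ ^ r < ‖x‖ ^ r := by
          gcongr
          exact norm_combo_lt_of_ne le_rfl hn.ge hxy ha hb hab
      _ = a * ‖x‖ ^ r + b * ‖y‖ ^ r := by rw [← hn, ← add_mul, hab, one_mul]
  · calc ‖a • x + b • y‖ ^ r ≤ (a * ‖x‖ + b * ‖y‖) ^ r := by
          gcongr; exact norm_combo_le x y ha.le hb.le
      _ < a * ‖x‖ ^ r + b * ‖y‖ ^ r :=
          (strictConvexOn_rpow hr).2 (norm_nonneg x) (norm_nonneg y) hn ha hb hab

end Convexity

section Weak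

variable {X : Type*} [NormedAddCommGroup X] [NormedSpace ℝ X]

theorem continuous_dual_comp_toWeakSpace_symm (φ : StrongDual ℝ X) :
    Continuous fun w : WeakSpace ℝ X => φ ((toWeakSpace ℝ X).symm w) :=
  WeakBilin.eval_continuous _ φ

/-- Banach–Alaoglu, transported along the weak embedding of a reflexive space into its bidual. -/
theorem isCompact_closure_toWeakSpace_closedBall
    (hrefl : Function.Surjective (inclusionInDoubleDual ℝ X)) (r : ℝ) :
    IsCompact (closure (toWeakSpace ℝ X '' Metric.closedBall 0 r)) := by
  refine isCompact_closure_of_isBounded ℝ X _ ?_ fun Φ _ => ?_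
  · rw [(toWeakSpace ℝ X).injective.preimage_image]
    exact Metric.isBounded_closedBall
  · obtain ⟨x, hx⟩ := hrefl (WeakDual.toStrongDual Φ)
    exact ⟨toWeakSpace ℝ X x, by simp [inclusionInDoubleDualWeak_apply, hx]⟩

theorem lowerSemicontinuous_tikhonov_penalty {q α : ℝ} (hq : 0 ≤ q) (hα : 0 ≤ α) :
    LowerSemicontinuous fun w : WeakSpace ℝ X => α * ‖(toWeakSpace ℝ X).symm w‖ ^ q :=
  ((lowerSemicontinuous_norm_of_continuous_dual continuous_dual_comp_toWeakSpace_symm).rpow_const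
    (fun _ => norm_nonneg _) hq).const_mul hα

def RadonRieszProperty (X : Type*) [NormedAddCommGroup X] [NormedSpace ℝ X] : Prop :=
  ∀ (xk : ℕ → X) (x : X), (∀ φ : StrongDual ℝ X, Tendsto (fun k => φ (xk k)) atTop (𝓝 (φ x))) →
    Tendsto (fun k => ‖xk k‖) atTop (𝓝 ‖x‖) → Tendsto (fun k => ‖xk k - x‖) atTop (𝓝 0)

end Weak

section Tikhonov

variable {X Y : Type*} [NormedAddCommGroup X] [NormedSpace ℝ X] [NormedAddCommGroup Y]
  [NormedSpace ℝ Y] (A : X →L[ℝ] Y) {p q α : ℝ}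

noncomputable def tikhonov (p q α : ℝ) (y : Y) (x : X) : ℝ := ‖A x - y‖ ^ p + α * ‖x‖ ^ q

theorem tikhonov_zero (hq : q ≠ 0) (y : Y) : tikhonov A p q α y 0 = ‖y‖ ^ p := by
  simp [tikhonov, Real.zero_rpow hq]

theorem continuous_tikhonov_left (hp : 0 ≤ p) (x : X) :
    Continuous fun y => tikhonov A p q α y x := by
  unfold tikhonov
  fun_prop (disch := exact fun _ => Or.inr hp)

theorem norm_le_of_tikhonov_le (hq : 0 < q) (hα : 0 < α) {y : Y} {x : X}
    (h : tikhonov A p q α y x ≤ ‖y‖ ^ p) : ‖x‖ ≤ (‖y‖ ^ p / α) ^ q⁻¹ := by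
  have hres : 0 ≤ ‖A x - y‖ ^ p := by positivity
  rw [Real.le_rpow_inv_iff_of_pos (norm_nonneg x) (by positivity) hq, le_div_iff₀' hα]
  exact le_of_add_le_of_nonneg_right h hres

theorem lowerSemicontinuous_tikhonov_residual (hp : 0 ≤ p) :
    LowerSemicontinuous fun z : WeakSpace ℝ X × Y => ‖A ((toWeakSpace ℝ X).symm z.1) - z.2‖ ^ p :=
  (lowerSemicontinuous_norm_of_continuous_dual fun ψ => by
    have : Continuous fun z : WeakSpace ℝ X × Y => ψ (A ((toWeakSpace ℝ X).symm z.1)) - ψ z.2 :=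
      ((continuous_dual_comp_toWeakSpace_symm (ψ.comp A)).comp continuous_fst).sub
        (ψ.continuous.comp continuous_snd)
    simpa only [map_sub] using this).rpow_const (fun _ => norm_nonneg _) hp

theorem lowerSemicontinuous_tikhonov (hp : 0 ≤ p) (hq : 0 ≤ q) (hα : 0 ≤ α) :
    LowerSemicontinuous fun z : WeakSpace ℝ X × Y =>
      tikhonov A p q α z.2 ((toWeakSpace ℝ X).symm z.1) :=
  (lowerSemicontinuous_tikhonov_residual A hp).add
    ((lowerSemicontinuous_tikhonov_penalty hq hα).comp continuous_fst)

/-- A minimizer is sought on a weakly compact ball: outside the ball of radius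
`(‖y‖ ^ p / α) ^ q⁻¹` the functional already exceeds its value `‖y‖ ^ p` at the origin. -/
theorem exists_forall_tikhonov_le (hrefl : Function.Surjective (inclusionInDoubleDual ℝ X))
    (hp : 0 ≤ p) (hq : 0 < q) (hα : 0 < α) (y : Y) :
    ∃ x : X, ∀ z, tikhonov A p q α y x ≤ tikhonov A p q α y z := by
  set K := closure (toWeakSpace ℝ X '' Metric.closedBall 0 ((‖y‖ ^ p / α) ^ q⁻¹))
  have hK : IsCompact K := isCompact_closure_toWeakSpace_closedBall hrefl _
  have hmem : ∀ z : X, tikhonov A p q α y z ≤ ‖y‖ ^ p → toWeakSpace ℝ X z ∈ K := fun z hz =>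
    subset_closure <| mem_image_of_mem _ <|
      mem_closedBall_zero_iff.2 (norm_le_of_tikhonov_le A hq hα hz)
  have h₀ : toWeakSpace ℝ X 0 ∈ K := hmem 0 (tikhonov_zero A hq.ne' y).le
  have hF : LowerSemicontinuousOn (fun w => tikhonov A p q α y ((toWeakSpace ℝ X).symm w)) K :=
    ((lowerSemicontinuous_tikhonov A hp hq.le hα.le).comp
      (continuous_id.prodMk continuous_const)).lowerSemicontinuousOn K
  obtain ⟨w, -, hw⟩ := hF.exists_isMinOn ⟨_, h₀⟩ hK
  refine ⟨(toWeakSpace ℝ X).symm w, fun z => ?_⟩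
  by_cases hz : tikhonov A p q α y z ≤ ‖y‖ ^ p
  · simpa using hw (hmem z hz)
  · have h₀w : tikhonov A p q α y ((toWeakSpace ℝ X).symm w) ≤ ‖y‖ ^ p := by
      simpa [tikhonov_zero A hq.ne'] using hw h₀
    linarith

theorem strictConvexOn_tikhonov [StrictConvexSpace ℝ X] (hp : 1 ≤ p) (hq : 1 < q) (hα : 0 < α)
    (y : Y) : StrictConvexOn ℝ univ (tikhonov A p q α y) := by
  have hres : ConvexOn ℝ univ fun x => ‖A x - y‖ ^ p := by
    have := (convexOn_norm_rpow hp).comp_affineMap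
      ((A : X →ₗ[ℝ] Y).toAffineMap - AffineMap.const ℝ X y)
    simpa [Function.comp_def] using this
  have hpen : StrictConvexOn ℝ univ fun x : X => α * ‖x‖ ^ q := by
    refine ⟨convex_univ, fun x hx z hz hxz a b ha hb hab => ?_⟩
    have := (strictConvexOn_norm_rpow hq).2 hx hz hxz ha hb hab
    simp only [smul_eq_mul] at this ⊢
    nlinarith
  exact hres.add_strictConvexOn hpen

theorem tendsto_toWeakSpace_of_forall_tikhonov_le
    (hrefl : Function.Surjective (inclusionInDoubleDual ℝ X)) (hp : 0 ≤ p) (hq : 0 < q)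
    (hα : 0 < α) {B : Y → X} (hB : ∀ y z, tikhonov A p q α y (B y) ≤ tikhonov A p q α y z)
    {y : Y} (huniq : ∀ x, (∀ z, tikhonov A p q α y x ≤ tikhonov A p q α y z) → x = B y)
    {ι : Type*} {l : Filter ι} {yk : ι → Y} (hyk : Tendsto yk l (𝓝 y)) :
    Tendsto (fun k => toWeakSpace ℝ X (B (yk k))) l (𝓝 (toWeakSpace ℝ X (B y))) := by
  refine (isCompact_closure_toWeakSpace_closedBall hrefl (((‖y‖ + 1) ^ p / α) ^ q⁻¹))
    |>.tendsto_nhds_of_unique_mapClusterPt ?_ fun w _ hw => ?_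
  · filter_upwards [hyk.norm.eventually (gt_mem_nhds (lt_add_one ‖y‖))] with k hk
    refine subset_closure (mem_image_of_mem _ (mem_closedBall_zero_iff.2 ?_))
    calc ‖B (yk k)‖ ≤ (‖yk k‖ ^ p / α) ^ q⁻¹ :=
          norm_le_of_tikhonov_le A hq hα ((hB _ 0).trans (tikhonov_zero A hq.ne' _).le)
      _ ≤ ((‖y‖ + 1) ^ p / α) ^ q⁻¹ := by gcongr
  · have hwy : tikhonov A p q α y ((toWeakSpace ℝ X).symm w) ≤ tikhonov A p q α y (B y) :=
      (lowerSemicontinuous_tikhonov A hp hq.le hα.le).le_of_mapClusterPt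
        (hw.prodMk_of_tendsto hyk) (Eventually.of_forall fun k => by simpa using hB (yk k) (B y))
        (((continuous_tikhonov_left A hp _).tendsto y).comp hyk)
    rw [← huniq _ fun z => hwy.trans (hB y z), LinearEquiv.apply_symm_apply]

theorem continuous_of_forall_tikhonov_le
    (hrefl : Function.Surjective (inclusionInDoubleDual ℝ X)) (hRR : RadonRieszProperty X)
    (hp : 0 ≤ p) (hq : 0 < q) (hα : 0 < α) {B : Y → X}
    (hB : ∀ y z, tikhonov A p q α y (B y) ≤ tikhonov A p q α y z)
    (huniq : ∀ y x, (∀ z, tikhonov A p q α y x ≤ tikhonov A p q α y z) → x = B y) :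
    Continuous B := by
  refine continuous_iff_seqContinuous.2 fun yk y hyk => ?_
  have hweak := tendsto_toWeakSpace_of_forall_tikhonov_le A hrefl hp hq hα hB (huniq y) hyk
  have hpen : Tendsto (fun k => α * ‖B (yk k)‖ ^ q) atTop (𝓝 (α * ‖B y‖ ^ q)) := by
    simpa using (lowerSemicontinuous_tikhonov_residual A hp).tendsto_of_add_le
      ((lowerSemicontinuous_tikhonov_penalty hq.le hα.le).comp continuous_fst)
      (hweak.prodMk_nhds hyk)
      (Eventually.of_forall fun k => by simpa [tikhonov] using hB (yk k) (B y))
      (((continuous_tikhonov_left A hp (B y)).tendsto y).comp hyk)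
  have hnorm : Tendsto (fun k => ‖B (yk k)‖) atTop (𝓝 ‖B y‖) := by
    have hinv : ∀ x : X, (α * ‖x‖ ^ q / α) ^ q⁻¹ = ‖x‖ := fun x => by
      rw [mul_div_cancel_left₀ _ hα.ne', Real.rpow_rpow_inv (norm_nonneg x) hq.ne']
    simpa only [Function.comp_def, id, hinv] using (((continuous_id.div_const α).rpow_const
      fun _ => Or.inr (inv_nonneg.2 hq.le)).tendsto _).comp hpen
  refine tendsto_iff_norm_sub_tendsto_zero.2 (hRR _ _ (fun φ => ?_) hnorm)
  simpa [Function.comp_def] using ((continuous_dual_comp_toWeakSpace_symm φ).tendsto _).comp hweak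

end Tikhonov

theorem stmt_18_general
    {X Y : Type*} [NormedAddCommGroup X] [NormedSpace ℝ X]
    [StrictConvexSpace ℝ X]
    [NormedAddCommGroup Y] [NormedSpace ℝ Y]
    (hrefl : Function.Surjective (NormedSpace.inclusionInDoubleDual ℝ X))
    (hRR : ∀ (xk : ℕ → X) (x : X),
      (∀ φ : X →L[ℝ] ℝ,
        Filter.Tendsto (fun k => φ (xk k)) Filter.atTop (nhds (φ x))) →
      Filter.Tendsto (fun k => ‖xk k‖) Filter.atTop (nhds ‖x‖) →
      Filter.Tendsto (fun k => ‖xk k - x‖) Filter.atTop (nhds 0))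
    (A : X →L[ℝ] Y) (p q α : ℝ) (hp : 1 < p) (hq : 1 < q) (hα : 0 < α) :
    ∃ B : Y → X, Continuous B ∧ ∀ y : Y,
      (∀ x : X, ‖A (B y) - y‖ ^ p + α * ‖B y‖ ^ q ≤ ‖A x - y‖ ^ p + α * ‖x‖ ^ q) ∧
      (∀ x : X,
        (∀ z : X, ‖A x - y‖ ^ p + α * ‖x‖ ^ q ≤ ‖A z - y‖ ^ p + α * ‖z‖ ^ q) →
        x = B y) := by
  have hp₀ : 0 ≤ p := zero_le_one.trans hp.le
  have hq₀ : 0 < q := zero_lt_one.trans hq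
  choose B hB using exists_forall_tikhonov_le A hrefl hp₀ hq₀ hα
  have huniq : ∀ y x, (∀ z, tikhonov A p q α y x ≤ tikhonov A p q α y z) → x = B y :=
    fun y x hx => (strictConvexOn_tikhonov A hp.le hq hα y).eq_of_isMinOn
      (isMinOn_univ_iff.2 hx) (isMinOn_univ_iff.2 (hB y)) (mem_univ x) (mem_univ _)
  exact ⟨B, continuous_of_forall_tikhonov_le A hrefl hRR hp₀ hq₀ hα hB huniq,
    fun y => ⟨hB y, huniq y⟩⟩

/-- Tikhonov regularization in Banach spaces: if `X` is reflexive, strictly convex and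
has the Radon–Riesz property, then for `p, q > 1` and `α > 0` the Tikhonov functional
`x ↦ ‖A x - y‖^p + α ‖x‖^q` has a unique minimizer `B_α(y)` for each `y`, and the map
`B_α : Y → X` is continuous. -/
theorem stmt_18
    {X Y : Type*} [NormedAddCommGroup X] [NormedSpace ℝ X] [CompleteSpace X]
    [StrictConvexSpace ℝ X]
    [NormedAddCommGroup Y] [NormedSpace ℝ Y] [CompleteSpace Y]
    (hrefl : Function.Surjective (NormedSpace.inclusionInDoubleDual ℝ X))
    (hRR : ∀ (xk : ℕ → X) (x : X),
      (∀ φ : X →L[ℝ] ℝ,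
        Filter.Tendsto (fun k => φ (xk k)) Filter.atTop (nhds (φ x))) →
      Filter.Tendsto (fun k => ‖xk k‖) Filter.atTop (nhds ‖x‖) →
      Filter.Tendsto (fun k => ‖xk k - x‖) Filter.atTop (nhds 0))
    (A : X →L[ℝ] Y) (p q α : ℝ) (hp : 1 < p) (hq : 1 < q) (hα : 0 < α) :
    ∃ B : Y → X, Continuous B ∧ ∀ y : Y,
      (∀ x : X, ‖A (B y) - y‖ ^ p + α * ‖B y‖ ^ q ≤ ‖A x - y‖ ^ p + α * ‖x‖ ^ q) ∧
      (∀ x : X,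
        (∀ z : X, ‖A x - y‖ ^ p + α * ‖x‖ ^ q ≤ ‖A z - y‖ ^ p + α * ‖z‖ ^ q) →
        x = B y) :=
  stmt_18_general hrefl hRR A p q α hp hq hα
end

section
/- Let X be a reflexive, strictly convex real Banach space satisfying the Radon–Riesz property, Y a real Banach space, A : X → Y a bounded linear operator, and p, q > 1. For α > 0 and y ∈ Y let B_α(y) denote the unique minimizer of x ↦ ‖A x − y‖^p + α ‖x‖^q. Let α₀ : (0,∞) → (0,∞) satisfy α₀(δ) → 0 and δ^p/α₀(δ) → 0 as δ → 0. Then for every x ∈ X that is the unique minimal-norm solution of A z = A x (i.e., ‖x‖ < ‖z‖ for every z ≠ x with A z = A x), one has sup{‖x − B_{α₀(δ)}(y^δ)‖ : y^δ ∈ Y, ‖A x − y^δ‖ ≤ δ} → 0 as δ → 0. -/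
/-!
Put `a = α₀(δ)`. Comparing the Tikhonov functional at `B_a(y^δ)` with its value at `x` gives
`‖B_a(y^δ)‖^q ≤ δ^p / a + ‖x‖^q` and `‖A B_a(y^δ) - y^δ‖^p ≤ δ^p + a ‖x‖^q`, so along any
sequence `δ_k → 0` the regularized solutions `x_k` satisfy `limsup ‖x_k‖ ≤ ‖x‖` and
`A x_k → A x`. By reflexivity, bounded sets are relatively weakly compact, and closed convex
sets are weakly closed; hence every weak cluster point `z` of `(x_k)` has `‖z‖ ≤ ‖x‖` and
`A z = A x`, which forces `z = x`. So `x_k ⇀ x`, weak lower semicontinuity of the norm gives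
`‖x_k‖ → ‖x‖`, and the Radon–Riesz property upgrades this to `x_k → x` in norm.
-/

open Filter Metric Set NormedSpace Topology

section WeakTopology

variable {X Y : Type*} [NormedAddCommGroup X] [NormedSpace ℝ X] [NormedAddCommGroup Y]
  [NormedSpace ℝ Y] {ι : Type*} {l : Filter ι} {u : ι → X}

theorem Convex.isClosed_toWeakSpace_image {s : Set X} (hs : Convex ℝ s) (hc : IsClosed s) :
    IsClosed (toWeakSpace ℝ X '' s) := by
  rw [← hc.closure_eq, hs.toWeakSpace_closure ℝ]
  exact isClosed_closure

theorem Convex.mem_of_mapClusterPt_toWeakSpace {s : Set X} (hs : Convex ℝ s) (hc : IsClosed s)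
    (hu : ∀ᶠ i in l, u i ∈ s) {z : X}
    (hz : MapClusterPt (toWeakSpace ℝ X z) l fun i => toWeakSpace ℝ X (u i)) : z ∈ s := by
  simpa using (hs.isClosed_toWeakSpace_image hc).mem_of_mapClusterPt hz
    (hu.mono fun i hi => mem_image_of_mem _ hi)

theorem isCompact_toWeakSpace_closedBall
    (hrefl : Function.Surjective (inclusionInDoubleDual ℝ X)) (r : ℝ) :
    IsCompact (toWeakSpace ℝ X '' closedBall 0 r) := by
  have hclosed := (convex_closedBall (0 : X) r).isClosed_toWeakSpace_image isClosed_closedBall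
  rw [← hclosed.closure_eq]
  refine isCompact_closure_of_isBounded ℝ X _ ?_ ?_
  · rw [preimage_image_eq _ (toWeakSpace ℝ X).injective]
    exact isBounded_closedBall
  · rintro F -
    obtain ⟨x, hx⟩ := hrefl (WeakDual.toStrongDual F)
    exact ⟨toWeakSpace ℝ X x, hx⟩

theorem tendsto_toWeakSpace_of_isMinNormSolution
    (hrefl : Function.Surjective (inclusionInDoubleDual ℝ X))
    (A : X →L[ℝ] Y) {x : X} (hmin : ∀ z : X, A z = A x → z ≠ x → ‖x‖ < ‖z‖) (hb : ∀ r > ‖x‖, ∀ᶠ i in l, ‖u i‖ ≤ r)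
    (hA : Tendsto (fun i => A (u i)) l (𝓝 (A x))) :
    Tendsto (fun i => toWeakSpace ℝ X (u i)) l (𝓝 (toWeakSpace ℝ X x)) := by
  refine (isCompact_toWeakSpace_closedBall hrefl (‖x‖ + 1)).tendsto_nhds_of_unique_mapClusterPt
    ((hb _ (lt_add_one _)).mono fun i hi => mem_image_of_mem _ (by simpa using hi)) ?_
  rintro _ ⟨z, -, rfl⟩ hz
  have hnorm : ‖z‖ ≤ ‖x‖ := le_of_forall_gt_imp_ge_of_dense fun r hr => by
    simpa using (convex_closedBall 0 r).mem_of_mapClusterPt_toWeakSpace isClosed_closedBall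
      ((hb r hr).mono fun i hi => by simpa using hi) hz
  have hAz : A z = A x := eq_of_forall_dist_le fun η hη =>
    ((convex_closedBall (A x) η).linear_preimage A.toLinearMap).mem_of_mapClusterPt_toWeakSpace
      (isClosed_closedBall.preimage A.continuous)
      (hA.eventually (closedBall_mem_nhds _ hη)) hz
  by_contra hne
  exact (hmin z hAz ((toWeakSpace ℝ X).injective.ne hne)).not_ge hnorm

theorem tendsto_norm_of_tendsto_toWeakSpace {x : X}
    (hw : Tendsto (fun i => toWeakSpace ℝ X (u i)) l (𝓝 (toWeakSpace ℝ X x)))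
    (hb : ∀ r > ‖x‖, ∀ᶠ i in l, ‖u i‖ ≤ r) :
    Tendsto (fun i => ‖u i‖) l (𝓝 ‖x‖) := by
  refine tendsto_order.2 ⟨fun a ha => ?_, fun b hb' => ?_⟩
  · have hopen : IsOpen (toWeakSpace ℝ X '' (closedBall 0 a)ᶜ) := by
      rw [image_compl_eq (toWeakSpace ℝ X).bijective]
      exact ((convex_closedBall 0 a).isClosed_toWeakSpace_image isClosed_closedBall).isOpen_compl
    filter_upwards [hw (hopen.mem_nhds (mem_image_of_mem _ (by simpa using ha)))] with i hi
    simpa using hi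
  · filter_upwards [hb ((‖x‖ + b) / 2) (by linarith)] with i hi
    linarith

end WeakTopology

section Tikhonov

variable {X Y : Type*} [NormedAddCommGroup X] [NormedSpace ℝ X] [NormedAddCommGroup Y]
  [NormedSpace ℝ Y] {A : X →L[ℝ] Y} {p q : ℝ} {x : X} {ι : Type*} {l : Filter ι}
  {a δ : ι → ℝ} {y : ι → Y} {u : ι → X}

theorem eventually_norm_le_of_tikhonov (hq : 0 < q) (ha : ∀ i, 0 < a i)
    (hrate : Tendsto (fun i => δ i ^ p / a i) l (𝓝 0))
    (hkey : ∀ i, ‖A (u i) - y i‖ ^ p + a i * ‖u i‖ ^ q ≤ δ i ^ p + a i * ‖x‖ ^ q) :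
    ∀ r > ‖x‖, ∀ᶠ i in l, ‖u i‖ ≤ r := by
  intro r hr
  have hxr : ‖x‖ ^ q < r ^ q := Real.rpow_lt_rpow (norm_nonneg _) hr hq
  filter_upwards [hrate.eventually (gt_mem_nhds (sub_pos.2 hxr))] with i hi
  have hu : ‖u i‖ ^ q ≤ δ i ^ p / a i + ‖x‖ ^ q := by
    rw [← sub_le_iff_le_add, le_div_iff₀ (ha i)]
    nlinarith [Real.rpow_nonneg (norm_nonneg (A (u i) - y i)) p, hkey i]
  exact (Real.rpow_le_rpow_iff (norm_nonneg _) ((norm_nonneg x).trans hr.le) hq).1 (by linarith)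

theorem tendsto_apply_of_tikhonov (hp : 0 < p) (ha : ∀ i, 0 < a i)
    (ha0 : Tendsto a l (𝓝 0)) (hrate : Tendsto (fun i => δ i ^ p / a i) l (𝓝 0))
    (hδ : Tendsto δ l (𝓝 0)) (hy : ∀ i, ‖A x - y i‖ ≤ δ i)
    (hkey : ∀ i, ‖A (u i) - y i‖ ^ p + a i * ‖u i‖ ^ q ≤ δ i ^ p + a i * ‖x‖ ^ q) :
    Tendsto (fun i => A (u i)) l (𝓝 (A x)) := by
  have hres : Tendsto (fun i => ‖A (u i) - y i‖) l (𝓝 0) := by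
    have hbound : Tendsto (fun i => (a i * (δ i ^ p / a i + ‖x‖ ^ q)) ^ p⁻¹) l (𝓝 0) := by
      have h0 : Tendsto (fun i => a i * (δ i ^ p / a i + ‖x‖ ^ q)) l (𝓝 0) := by
        simpa using ha0.mul (hrate.add_const (‖x‖ ^ q))
      exact h0.rpow_const_nhds_zero (inv_pos.2 hp)
    refine squeeze_zero (fun i => norm_nonneg _) (fun i => ?_) hbound
    rw [mul_add, mul_div_cancel₀ _ (ha i).ne', Real.le_rpow_inv_iff_of_pos (norm_nonneg _) _ hp]
    · nlinarith [Real.rpow_nonneg (norm_nonneg (u i)) q, ha i, hkey i]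
    · exact (add_nonneg (Real.rpow_nonneg (norm_nonneg _) p)
        (mul_nonneg (ha i).le (Real.rpow_nonneg (norm_nonneg _) q))).trans (hkey i)
  rw [tendsto_iff_norm_sub_tendsto_zero]
  refine squeeze_zero (fun i => norm_nonneg _) (fun i => ?_) (by simpa using hres.add hδ)
  calc ‖A (u i) - A x‖ ≤ ‖A (u i) - y i‖ + ‖y i - A x‖ := norm_sub_le_norm_sub_add_norm_sub _ _ _
    _ ≤ ‖A (u i) - y i‖ + δ i := by gcongr; rw [norm_sub_rev]; exact hy i

end Tikhonov

theorem stmt_19_general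
    {X Y : Type*} [NormedAddCommGroup X] [NormedSpace ℝ X]
    [NormedAddCommGroup Y] [NormedSpace ℝ Y]
    (hrefl : Function.Surjective (NormedSpace.inclusionInDoubleDual ℝ X))
    (hRR : ∀ (xk : ℕ → X) (x : X),
      (∀ φ : X →L[ℝ] ℝ,
        Filter.Tendsto (fun k => φ (xk k)) Filter.atTop (nhds (φ x))) →
      Filter.Tendsto (fun k => ‖xk k‖) Filter.atTop (nhds ‖x‖) →
      Filter.Tendsto (fun k => ‖xk k - x‖) Filter.atTop (nhds 0))
    (A : X →L[ℝ] Y) (p q : ℝ) (hp : 1 < p) (hq : 1 < q)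
    (Bα : ℝ → Y → X)
    (hBmin : ∀ a : ℝ, 0 < a → ∀ y : Y, ∀ x : X,
      ‖A (Bα a y) - y‖ ^ p + a * ‖Bα a y‖ ^ q ≤ ‖A x - y‖ ^ p + a * ‖x‖ ^ q)
    (α₀ : ℝ → ℝ) (hα₀pos : ∀ δ : ℝ, 0 < δ → 0 < α₀ δ)
    (hα₀0 : Filter.Tendsto α₀ (nhdsWithin 0 (Set.Ioi (0 : ℝ))) (nhds 0))
    (hα₀rate : Filter.Tendsto (fun δ : ℝ => δ ^ p / α₀ δ)
      (nhdsWithin 0 (Set.Ioi (0 : ℝ))) (nhds 0)) :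
    ∀ x : X, (∀ z : X, A z = A x → z ≠ x → ‖x‖ < ‖z‖) →
      ∀ ε : ℝ, 0 < ε → ∃ δ₀ > 0, ∀ δ : ℝ, 0 < δ → δ ≤ δ₀ →
        ∀ yδ : Y, ‖A x - yδ‖ ≤ δ → ‖x - Bα (α₀ δ) yδ‖ ≤ ε := by
  intro x hmin ε hε
  by_contra! hfar
  choose δ hδpos hδle yδ hyδ hfar using fun k : ℕ => hfar (1 / (k + 1)) (by positivity)
  have hδ0 : Tendsto δ atTop (𝓝 0) :=
    squeeze_zero (fun k => (hδpos k).le) hδle tendsto_one_div_add_atTop_nhds_zero_nat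
  have hδ : Tendsto δ atTop (𝓝[>] 0) :=
    tendsto_nhdsWithin_of_tendsto_nhds_of_eventually_within δ hδ0 (.of_forall hδpos)
  have hα : ∀ k, 0 < α₀ (δ k) := fun k => hα₀pos _ (hδpos k)
  set u : ℕ → X := fun k => Bα (α₀ (δ k)) (yδ k)
  have hkey (k : ℕ) : ‖A (u k) - yδ k‖ ^ p + α₀ (δ k) * ‖u k‖ ^ q
      ≤ δ k ^ p + α₀ (δ k) * ‖x‖ ^ q := by
    refine (hBmin _ (hα k) (yδ k) x).trans ?_
    gcongr
    exact hyδ k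
  have hb := eventually_norm_le_of_tikhonov (by linarith) hα (hα₀rate.comp hδ) hkey
  have hw := tendsto_toWeakSpace_of_isMinNormSolution hrefl A hmin hb
    (tendsto_apply_of_tikhonov (by linarith) hα (hα₀0.comp hδ) (hα₀rate.comp hδ) hδ0 hyδ hkey)
  have hconv := hRR u x (fun φ => ((WeakBilin.eval_continuous _ φ).tendsto _).comp hw)
    (tendsto_norm_of_tendsto_toWeakSpace hw hb)
  obtain ⟨k, hk⟩ := (hconv.eventually (gt_mem_nhds hε)).exists
  exact (hfar k).not_ge (by rw [norm_sub_rev]; exact hk.le)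

/-- Convergence of Tikhonov regularization in Banach spaces: if `X` is reflexive,
strictly convex and has the Radon–Riesz property, `B_α(y)` is the unique minimizer of
`x ↦ ‖A x - y‖^p + α ‖x‖^q` (`p, q > 1`), and the parameter choice satisfies
`α₀(δ) → 0` and `δ^p / α₀(δ) → 0` as `δ → 0`, then for every `x` that is the unique
minimal-norm solution of `A z = A x`,
`sup {‖x - B_{α₀(δ)}(y^δ)‖ : ‖A x - y^δ‖ ≤ δ} → 0` as `δ → 0`. -/
theorem stmt_19
    {X Y : Type*} [NormedAddCommGroup X] [NormedSpace ℝ X] [CompleteSpace X]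
    [StrictConvexSpace ℝ X]
    [NormedAddCommGroup Y] [NormedSpace ℝ Y] [CompleteSpace Y]
    (hrefl : Function.Surjective (NormedSpace.inclusionInDoubleDual ℝ X))
    (hRR : ∀ (xk : ℕ → X) (x : X),
      (∀ φ : X →L[ℝ] ℝ,
        Filter.Tendsto (fun k => φ (xk k)) Filter.atTop (nhds (φ x))) →
      Filter.Tendsto (fun k => ‖xk k‖) Filter.atTop (nhds ‖x‖) →
      Filter.Tendsto (fun k => ‖xk k - x‖) Filter.atTop (nhds 0))
    (A : X →L[ℝ] Y) (p q : ℝ) (hp : 1 < p) (hq : 1 < q)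
    (Bα : ℝ → Y → X)
    (hBmin : ∀ a : ℝ, 0 < a → ∀ y : Y, ∀ x : X,
      ‖A (Bα a y) - y‖ ^ p + a * ‖Bα a y‖ ^ q ≤ ‖A x - y‖ ^ p + a * ‖x‖ ^ q)
    (hBuniq : ∀ a : ℝ, 0 < a → ∀ y : Y, ∀ x : X,
      (∀ z : X, ‖A x - y‖ ^ p + a * ‖x‖ ^ q ≤ ‖A z - y‖ ^ p + a * ‖z‖ ^ q) →
      x = Bα a y)
    (α₀ : ℝ → ℝ) (hα₀pos : ∀ δ : ℝ, 0 < δ → 0 < α₀ δ)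
    (hα₀0 : Filter.Tendsto α₀ (nhdsWithin 0 (Set.Ioi (0 : ℝ))) (nhds 0))
    (hα₀rate : Filter.Tendsto (fun δ : ℝ => δ ^ p / α₀ δ)
      (nhdsWithin 0 (Set.Ioi (0 : ℝ))) (nhds 0)) :
    ∀ x : X, (∀ z : X, A z = A x → z ≠ x → ‖x‖ < ‖z‖) →
      ∀ ε : ℝ, 0 < ε → ∃ δ₀ > 0, ∀ δ : ℝ, 0 < δ → δ ≤ δ₀ →
        ∀ yδ : Y, ‖A x - yδ‖ ≤ δ → ‖x - Bα (α₀ δ) yδ‖ ≤ ε :=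
  stmt_19_general hrefl hRR A p q hp hq Bα hBmin α₀ hα₀pos hα₀0 hα₀rate
end
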